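/- Let A = (Q, ι, δ, F) be an NBA over a finite alphabet Σ, let D be a DAC of A, let w : ℕ → Σ be an infinite word, and consider the level-labelling functions (g_ℓ) of the DAC construction for D. For every ℓ ∈ ℕ and every q ∈ S_ℓ ∩ D such that q' = δ_D(q, w(ℓ)) exists and q' ∈ S_{ℓ+1} ∩ D, one has g_{ℓ+1}(q') ≤ g_ℓ(q). Consequently, for every run ρ of A over w with ρ(j) ∈ D for all j ≥ ℓ₀, the sequence (g_j(ρ(j)))_{j ≥ ℓ₀} is non-increasing and hence eventually constant. -/

import Mathlib

open scoped Classical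

/-- A nondeterministic Büchi automaton with state type `Q` and alphabet `A`:
an initial state, a transition relation (given as `trans : Q → A → Set Q`),
and a set `acc` of accepting transitions, which must be transitions of the automaton. -/
structure NBA (Q A : Type) where
  init : Q
  trans : Q → A → Set Q
  acc : Set (Q × A × Q)
  acc_sub : ∀ t ∈ acc, t.2.2 ∈ trans t.1 t.2.1

namespace NBA

variable {Q A : Type}

/-- `ρ` is a run of the NBA `M` over the infinite word `w`. -/
def IsRun (M : NBA Q A) (w : ℕ → A) (ρ : ℕ → Q) : Prop :=
  ρ 0 = M.init ∧ ∀ ℓ : ℕ, ρ (ℓ + 1) ∈ M.trans (ρ ℓ) (w ℓ)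

/-- `ρ` is an accepting run of `M` over `w`: a run taking accepting transitions
infinitely often. -/
def IsAcceptingRun (M : NBA Q A) (w : ℕ → A) (ρ : ℕ → Q) : Prop :=
  M.IsRun w ρ ∧ ∀ n : ℕ, ∃ ℓ ≥ n, (ρ ℓ, w ℓ, ρ (ℓ + 1)) ∈ M.acc

/-- `w` is in the language of `M`. -/
def InLanguage (M : NBA Q A) (w : ℕ → A) : Prop :=
  ∃ ρ : ℕ → Q, M.IsAcceptingRun w ρ

/-- `q'` is reachable from `q` (via a finite, possibly empty, word). -/
def Reach (M : NBA Q A) : Q → Q → Prop :=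
  Relation.ReflTransGen fun q q' => ∃ a : A, q' ∈ M.trans q a

/-- `C` is a strongly connected component: any two of its states are mutually
reachable, and it is maximal with this property. -/
def IsSCC (M : NBA Q A) (C : Set Q) : Prop :=
  (∀ q ∈ C, ∀ q' ∈ C, M.Reach q q' ∧ M.Reach q' q) ∧
  ∀ C' : Set Q, C ⊆ C' → (∀ q ∈ C', ∀ q' ∈ C', M.Reach q q' ∧ M.Reach q' q) → C' = C

/-- An SCC is accepting if it contains an accepting transition. -/
def AccSCC (M : NBA Q A) (C : Set Q) : Prop :=
  ∃ q ∈ C, ∃ a : A, ∃ q' ∈ C, (q, a, q') ∈ M.acc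

/-- A cycle through `C`: a nonempty finite sequence of transitions within
`C × A × C` starting and ending at the same state. -/
def IsCycle (M : NBA Q A) (C : Set Q) (n : ℕ) (p : ℕ → Q) (u : ℕ → A) : Prop :=
  1 ≤ n ∧ p n = p 0 ∧ ∀ i < n, p i ∈ C ∧ p (i + 1) ∈ C ∧ p (i + 1) ∈ M.trans (p i) (u i)

/-- The cycle visits an accepting transition. -/
def CycleHasAcc (M : NBA Q A) (n : ℕ) (p : ℕ → Q) (u : ℕ → A) : Prop :=
  ∃ i < n, (p i, u i, p (i + 1)) ∈ M.acc

/-- `C` is inherently weak: either every cycle through `C` contains an accepting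
transition, or no cycle through `C` does. -/
def InherentlyWeak (M : NBA Q A) (C : Set Q) : Prop :=
  (∀ n p u, M.IsCycle C n p u → M.CycleHasAcc n p u) ∨
  (∀ n p u, M.IsCycle C n p u → ¬ M.CycleHasAcc n p u)

/-- `δ(S, a)`, the set of successors of states of `S` under letter `a`. -/
def stepSet (M : NBA Q A) (S : Set Q) (a : A) : Set Q :=
  {q' | ∃ q ∈ S, q' ∈ M.trans q a}

/-- `S_ℓ`: the set of states reached at level `ℓ` of the run DAG of `M` over `w`. -/
def reachSet (M : NBA Q A) (w : ℕ → A) : ℕ → Set Q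
  | 0 => {M.init}
  | ℓ + 1 => M.stepSet (M.reachSet w ℓ) (w ℓ)

/-- `W`: the union of the inherently weak SCCs. -/
def weakStates (M : NBA Q A) : Set Q :=
  {q | ∃ C : Set Q, M.IsSCC C ∧ M.InherentlyWeak C ∧ q ∈ C}

/-- `WA`: the union of the accepting inherently weak SCCs. -/
def weakAccStates (M : NBA Q A) : Set Q :=
  {q | ∃ C : Set Q, M.IsSCC C ∧ M.InherentlyWeak C ∧ M.AccSCC C ∧ q ∈ C}

/-- The sequence `(P_ℓ, O_ℓ)` of the inherently-weak-SCC construction of `M` over `w`. -/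
noncomputable def weakSeq (M : NBA Q A) (w : ℕ → A) : ℕ → Set Q × Set Q
  | 0 => ({M.init} ∩ M.weakStates, ∅)
  | ℓ + 1 =>
      (M.reachSet w (ℓ + 1) ∩ M.weakStates,
        if (M.weakSeq w ℓ).2 = ∅ then
          (M.reachSet w (ℓ + 1) ∩ M.weakStates) ∩ M.weakAccStates
        else M.stepSet (M.weakSeq w ℓ).2 (w ℓ) ∩ M.weakAccStates)

end NBA

namespace NBA

variable {Q A : Type}

/-- An SCC `C` is deterministic if every state has at most one `a`-successor inside `C`. -/
def IsDeterministicSCC (M : NBA Q A) (C : Set Q) : Prop :=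
  ∀ q ∈ C, ∀ a : A, (M.trans q a ∩ C).Subsingleton

/-- A DAC: an accepting SCC that is deterministic and not inherently weak. -/
def IsDAC (M : NBA Q A) (C : Set Q) : Prop :=
  M.IsSCC C ∧ M.AccSCC C ∧ M.IsDeterministicSCC C ∧ ¬ M.InherentlyWeak C

/-- `δ_D(S ∩ D, a)`: the states of `D` reached from `S ∩ D` by an `a`-transition inside `D`. -/
def dacImage (M : NBA Q A) (D S : Set Q) (a : A) : Set Q :=
  {q' ∈ D | ∃ q ∈ S ∩ D, q' ∈ M.trans q a}

/-- The intermediate level-labelling `g'` of the DAC construction: states reached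
inside `D` inherit the minimum label of their predecessors, newly entering states
(in the order `≼` on `Q`) get labels `|D| + 1, |D| + 2, …`, and all other states
get `∞`. Here `S` and `S'` are the sets of states reached at the current and next
levels of the run DAG. -/
noncomputable def dacPrime [LinearOrder Q] (M : NBA Q A) (D : Set Q)
    (S S' : Set Q) (a : A) (g : Q → ℕ∞) : Q → ℕ∞ := fun q' =>
  if q' ∈ M.dacImage D S a then
    sInf {v : ℕ∞ | ∃ q ∈ S ∩ D, q' ∈ M.trans q a ∧ g q = v}
  else if q' ∈ (S' ∩ D) \ M.dacImage D S a then
    ((D.ncard + Set.ncard {p | p ∈ (S' ∩ D) \ M.dacImage D S a ∧ p < q'} + 1 : ℕ) : ℕ∞)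
  else ⊤

/-- Rank compression `ord`: each finite label is replaced by its relative position
among the finite labels occurring in the image of `g` on `D`. -/
noncomputable def dacOrd (D : Set Q) (g : Q → ℕ∞) : Q → ℕ∞ := fun q =>
  if g q ≠ ⊤ then
    ((Set.ncard {v : ℕ∞ | v ≤ g q ∧ v ≠ ⊤ ∧ ∃ p ∈ D, g p = v} : ℕ) : ℕ∞)
  else ⊤

/-- The sequence `g_ℓ` of level-labelling functions of the DAC construction for
the DAC `D` of `M` over the word `w`. -/
noncomputable def dacG [LinearOrder Q] (M : NBA Q A) (D : Set Q) (w : ℕ → A) :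
    ℕ → Q → ℕ∞
  | 0 => fun q => if q = M.init ∧ q ∈ D then 1 else ⊤
  | ℓ + 1 =>
      dacOrd D
        (M.dacPrime D (M.reachSet w ℓ) (M.reachSet w (ℓ + 1)) (w ℓ) (M.dacG D w ℓ))

/-- The color `c_ℓ` emitted by the step from level `ℓ` to level `ℓ + 1` of the DAC
construction: with `B(e)` the vanished labels (plus `|D| + 1`) and `G(e)` the labels
witnessing an accepting transition (plus `|D| + 1`), the color is
`min (2 ⬝ min B(e) − 1) (2 ⬝ min G(e))`. -/
noncomputable def dacColor [LinearOrder Q] (M : NBA Q A) (D : Set Q) (w : ℕ → A)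
    (ℓ : ℕ) : ℕ :=
  let g := M.dacG D w ℓ
  let g' := M.dacPrime D (M.reachSet w ℓ) (M.reachSet w (ℓ + 1)) (w ℓ) g
  let B : Set ℕ :=
    insert (D.ncard + 1) {n : ℕ | (∃ q ∈ D, g q = (n : ℕ∞)) ∧ ¬ ∃ q ∈ D, g' q = (n : ℕ∞)}
  let G : Set ℕ :=
    insert (D.ncard + 1)
      {n : ℕ | ∃ q q' : Q, (q, w ℓ, q') ∈ M.acc ∧ g q = (n : ℕ∞) ∧ g' q' = (n : ℕ∞)}
  min (2 * sInf B - 1) (2 * sInf G)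

end NBA


/-!
The intermediate label `g'_{ℓ+1}(q')` of a successor inside `D` is a minimum over its
predecessors, so it is at most `g_ℓ(q)`. The compression `ord` never raises a label:
all labels are positive, so at most `n` distinct finite labels are `≤ n`. A sequence in `ℕ∞`
that is non-increasing from some index on stabilises, because `ℕ∞` is well-founded.
-/

theorem exists_forall_ge_eq_of_succ_le {α : Type*} [PartialOrder α] [WellFoundedLT α]
    {f : ℕ → α} {ℓ₀ : ℕ} (hf : ∀ j ≥ ℓ₀, f (j + 1) ≤ f j) :
    ∃ N ≥ ℓ₀, ∀ j ≥ N, f j = f N := by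
  have hanti : Antitone fun j => f (ℓ₀ + j) :=
    antitone_nat_of_succ_le fun j => hf (ℓ₀ + j) (Nat.le_add_right _ _)
  obtain ⟨n, hn⟩ := WellFoundedLT.antitone_chain_condition hanti
  refine ⟨ℓ₀ + n, Nat.le_add_right _ _, fun j hj => ?_⟩
  obtain ⟨k, rfl⟩ := Nat.exists_eq_add_of_le hj
  simpa [add_assoc] using (hn (n + k) (Nat.le_add_right _ _)).symm

namespace NBA

variable {Q A : Type}

theorem IsRun.mem_reachSet {M : NBA Q A} {w : ℕ → A} {ρ : ℕ → Q} (hρ : M.IsRun w ρ) :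
    ∀ j, ρ j ∈ M.reachSet w j
  | 0 => hρ.1
  | j + 1 => ⟨ρ j, hρ.mem_reachSet j, hρ.2 j⟩

section dacOrd

variable {D : Set Q} {g : Q → ℕ∞} {q : Q}

theorem dacOrd_ne_zero (hq : q ∈ D) : dacOrd D g q ≠ 0 := by
  unfold dacOrd
  split_ifs with hgq
  · lift g q to ℕ using hgq with n hn
    have hfin : {v : ℕ∞ | v ≤ n ∧ v ≠ ⊤ ∧ ∃ p ∈ D, g p = v}.Finite := by
      refine ((Set.finite_Iic n).image Nat.cast).subset fun v ⟨hvn, hv, _⟩ => ?_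
      lift v to ℕ using hv
      exact ⟨v, by exact_mod_cast hvn, rfl⟩
    rw [Nat.cast_ne_zero, ← Nat.pos_iff_ne_zero, Set.ncard_pos hfin]
    exact ⟨n, le_rfl, ENat.natCast_ne_top n, q, hq, hn.symm⟩
  · exact ENat.top_ne_zero

theorem dacOrd_le (hg : ∀ p ∈ D, g p ≠ 0) : dacOrd D g q ≤ g q := by
  unfold dacOrd
  split_ifs with hgq
  · lift g q to ℕ using hgq with n
    have hsub : {v : ℕ∞ | v ≤ n ∧ v ≠ ⊤ ∧ ∃ p ∈ D, g p = v} ⊆ Nat.cast '' Set.Icc 1 n := by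
      rintro v ⟨hvn, hv, p, hp, rfl⟩
      have hp0 := hg p hp
      lift g p to ℕ using hv with m
      exact ⟨m, ⟨Nat.one_le_iff_ne_zero.2 (by exact_mod_cast hp0), by exact_mod_cast hvn⟩, rfl⟩
    have hcard := (Set.ncard_le_ncard hsub ((Set.finite_Icc 1 n).image _)).trans
      (Set.ncard_image_le (Set.finite_Icc 1 n))
    rw [Set.ncard_Icc_nat, Nat.add_sub_cancel] at hcard
    exact_mod_cast hcard
  · exact (not_not.1 hgq).ge

end dacOrd

variable [LinearOrder Q] {M : NBA Q A} {D S S' : Set Q} {a : A} {g : Q → ℕ∞}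

theorem dacPrime_le {q q' : Q} (hq : q ∈ S) (hqD : q ∈ D) (hq'D : q' ∈ D)
    (hqq' : q' ∈ M.trans q a) : M.dacPrime D S S' a g q' ≤ g q := by
  rw [dacPrime, if_pos ⟨hq'D, q, ⟨hq, hqD⟩, hqq'⟩]
  exact sInf_le ⟨q, ⟨hq, hqD⟩, hqq', rfl⟩

theorem dacPrime_ne_zero (hg : ∀ p ∈ D, g p ≠ 0) (q : Q) : M.dacPrime D S S' a g q ≠ 0 := by
  unfold dacPrime
  split_ifs
  · refine Order.one_le_iff_ne_zero.1 (le_sInf ?_)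
    rintro _ ⟨p, ⟨-, hp⟩, -, rfl⟩
    exact Order.one_le_iff_ne_zero.2 (hg p hp)
  · exact Nat.cast_ne_zero.2 (Nat.succ_ne_zero _)
  · exact ENat.top_ne_zero

theorem dacG_ne_zero {w : ℕ → A} {q : Q} (hq : q ∈ D) : ∀ ℓ, M.dacG D w ℓ q ≠ 0
  | 0 => by unfold dacG; split_ifs <;> simp
  | _ + 1 => dacOrd_ne_zero hq

theorem dacG_succ_le {w : ℕ → A} {ℓ : ℕ} {q q' : Q} (hq : q ∈ M.reachSet w ℓ) (hqD : q ∈ D)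
    (hq'D : q' ∈ D) (hqq' : q' ∈ M.trans q (w ℓ)) :
    M.dacG D w (ℓ + 1) q' ≤ M.dacG D w ℓ q :=
  (dacOrd_le fun p _ => dacPrime_ne_zero (fun _ hp => dacG_ne_zero hp ℓ) p).trans
    (dacPrime_le hq hqD hq'D hqq')

end NBA

theorem dac_labels_nonincreasing_general {Q A : Type}
    [LinearOrder Q]
    (M : NBA Q A) (D : Set Q) (w : ℕ → A) :
    (∀ (ℓ : ℕ) (q q' : Q), q ∈ M.reachSet w ℓ → q ∈ D → q' ∈ D →
        q' ∈ M.trans q (w ℓ) → M.dacG D w (ℓ + 1) q' ≤ M.dacG D w ℓ q) ∧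
    (∀ (ρ : ℕ → Q) (ℓ₀ : ℕ), M.IsRun w ρ → (∀ j ≥ ℓ₀, ρ j ∈ D) →
      (∀ j ≥ ℓ₀, M.dacG D w (j + 1) (ρ (j + 1)) ≤ M.dacG D w j (ρ j)) ∧
      ∃ N ≥ ℓ₀, ∀ j ≥ N, M.dacG D w j (ρ j) = M.dacG D w N (ρ N)) := by
  refine ⟨fun _ _ _ => NBA.dacG_succ_le, fun ρ ℓ₀ hρ hρD => ?_⟩
  have hmono : ∀ j ≥ ℓ₀, M.dacG D w (j + 1) (ρ (j + 1)) ≤ M.dacG D w j (ρ j) :=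
    fun j hj => NBA.dacG_succ_le (hρ.mem_reachSet j) (hρD j hj) (hρD (j + 1) (by omega)) (hρ.2 j)
  exact ⟨hmono, exists_forall_ge_eq_of_succ_le hmono⟩

/-- In the DAC construction, labels never increase along
transitions inside `D`; consequently, along any run that stays in `D` from
level `ℓ₀` on, the labels form a non-increasing, hence eventually constant,
sequence. -/
theorem dac_labels_nonincreasing {Q A : Type}
    [Fintype Q] [LinearOrder Q] [Finite A]
    (M : NBA Q A) (D : Set Q) (hD : M.IsDAC D) (w : ℕ → A) :
    (∀ (ℓ : ℕ) (q q' : Q), q ∈ M.reachSet w ℓ → q ∈ D → q' ∈ D →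
        q' ∈ M.trans q (w ℓ) → M.dacG D w (ℓ + 1) q' ≤ M.dacG D w ℓ q) ∧
    (∀ (ρ : ℕ → Q) (ℓ₀ : ℕ), M.IsRun w ρ → (∀ j ≥ ℓ₀, ρ j ∈ D) →
      (∀ j ≥ ℓ₀, M.dacG D w (j + 1) (ρ (j + 1)) ≤ M.dacG D w j (ρ j)) ∧
      ∃ N ≥ ℓ₀, ∀ j ≥ N, M.dacG D w j (ρ j) = M.dacG D w N (ρ N)) :=
  dac_labels_nonincreasing_general M D w
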